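/- Let φ ∈ 𝒢(ℝⁿ×[0,∞)), s₀, s₁ ∈ C^{log}_loc(ℝⁿ) ∩ L^∞(ℝⁿ), and p₀, p₁ ∈ C^{log}(ℝⁿ) be such that s₁(x) ≤ s₀(x) and s₀(x) − n/p₀(x) = s₁(x) − n/p₁(x) for all x ∈ ℝⁿ. Then the sequence space embedding b^{s₀(·),φ}_{p₀(·),∞}(ℝⁿ) ↪ b^{s₁(·),φ}_{p₁(·),∞}(ℝⁿ) holds, i.e., there is a constant C with ‖t‖_{b^{s₁(·),φ}_{p₁(·),∞}} ≤ C ‖t‖_{b^{s₀(·),φ}_{p₀(·),∞}} for all sequences t = {t_Q}_{Q} indexed by dyadic cubes of side length ≤ 1. -/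

import Mathlib

open MeasureTheory Real FourierTransform
open scoped ENNReal BigOperators Classical

noncomputable section

/-- The dyadic cube `Q_{jk} = 2^{−j}([0,1)ⁿ + k)` in `ℝⁿ`. -/
def dyadicCube {n : ℕ} (j : ℤ) (k : Fin n → ℤ) : Set (EuclideanSpace ℝ (Fin n)) :=
  {x | ∀ i, (2 : ℝ) ^ (-j) * (k i : ℝ) ≤ x i ∧ x i < (2 : ℝ) ^ (-j) * ((k i : ℝ) + 1)}

/-- The lower-left corner `2^{−j} k` of the dyadic cube `Q_{jk}`. -/
def dyadicCorner {n : ℕ} (j : ℤ) (k : Fin n → ℤ) : EuclideanSpace ℝ (Fin n) :=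
  WithLp.toLp 2 (fun i => (2 : ℝ) ^ (-j) * (k i : ℝ))

/-- The variable-exponent modular (real-valued exponent, `ℝ≥0∞`-valued function). -/
def varModularR {n : ℕ} (p : EuclideanSpace ℝ (Fin n) → ℝ)
    (f : EuclideanSpace ℝ (Fin n) → ℝ≥0∞) : ℝ≥0∞ :=
  ∫⁻ x, f x ^ p x

/-- The variable-exponent Lebesgue (Luxemburg) quasi-norm. -/
def varNormR {n : ℕ} (p : EuclideanSpace ℝ (Fin n) → ℝ)
    (f : EuclideanSpace ℝ (Fin n) → ℝ≥0∞) : ℝ≥0∞ :=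
  sInf {lam : ℝ≥0∞ | 0 < lam ∧ varModularR p (fun x => f x / lam) ≤ 1}

/-- The inner infimum of the mixed Lebesgue-sequence semimodular. -/
def mixedInnerR {n : ℕ} (p q : EuclideanSpace ℝ (Fin n) → ℝ)
    (g : EuclideanSpace ℝ (Fin n) → ℝ≥0∞) : ℝ≥0∞ :=
  sInf {mu : ℝ≥0∞ | 0 < mu ∧
    varModularR p (fun x => g x / mu ^ (1 / q x)) ≤ 1}

/-- The mixed Lebesgue-sequence semimodular `ϱ_{ℓ^{q(·)}(L^{p(·)})}`. -/
def mixedModularR {n : ℕ} (p q : EuclideanSpace ℝ (Fin n) → ℝ)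
    (g : ℕ → EuclideanSpace ℝ (Fin n) → ℝ≥0∞) : ℝ≥0∞ :=
  ∑' v, mixedInnerR p q (g v)

/-- The mixed Lebesgue-sequence quasi-norm `‖·‖_{ℓ^{q(·)}(L^{p(·)})}`. -/
def mixedNormR {n : ℕ} (p q : EuclideanSpace ℝ (Fin n) → ℝ)
    (g : ℕ → EuclideanSpace ℝ (Fin n) → ℝ≥0∞) : ℝ≥0∞ :=
  sInf {lam : ℝ≥0∞ | 0 < lam ∧ mixedModularR p q (fun v x => g v x / lam) ≤ 1}

/-- Local log-Hölder continuity with constant `C`. -/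
def LocLogHolderWith {n : ℕ} (C : ℝ) (g : EuclideanSpace ℝ (Fin n) → ℝ) : Prop :=
  ∀ x y : EuclideanSpace ℝ (Fin n), x ≠ y →
    |g x - g y| ≤ C / Real.log (Real.exp 1 + 1 / dist x y)

/-- Global log-Hölder continuity. -/
def GlobLogHolder {n : ℕ} (g : EuclideanSpace ℝ (Fin n) → ℝ) : Prop :=
  (∃ C : ℝ, 0 < C ∧ LocLogHolderWith C g) ∧
    ∃ Cinf : ℝ, 0 < Cinf ∧ ∃ ginf : ℝ,
      ∀ x : EuclideanSpace ℝ (Fin n), |g x - ginf| ≤ Cinf / Real.log (Real.exp 1 + ‖x‖)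

/-- `φ ∈ 𝒢(ℝⁿ×[0,∞))`: positivity, doubling (constant `c₁`) and compatibility
(constant `c₂`). -/
def IsGWeight {n : ℕ} (φ : EuclideanSpace ℝ (Fin n) → ℝ → ℝ) (c₁ c₂ : ℝ) : Prop :=
  1 ≤ c₁ ∧ 1 ≤ c₂ ∧ (∀ x r, 0 < r → 0 < φ x r) ∧
    (∀ x r, 0 < r → c₁⁻¹ * φ x (2 * r) ≤ φ x r ∧ φ x r ≤ c₁ * φ x (2 * r)) ∧
    (∀ x y : EuclideanSpace ℝ (Fin n), ∀ r, 0 < r → dist x y ≤ r →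
      c₂⁻¹ * φ y r ≤ φ x r ∧ φ x r ≤ c₂ * φ y r)

/-- The value `φ(P)` of a weight on the dyadic cube `P = Q_{JK}`. -/
def weightOn {n : ℕ} (φ : EuclideanSpace ℝ (Fin n) → ℝ → ℝ)
    (J : ℤ) (K : Fin n → ℤ) : ℝ :=
  φ (dyadicCorner J K) ((2 : ℝ) ^ (-J))

/-- The `j`-th level function of the sequence space `b^{s(·),φ}_{p(·),q(·)}`
localized to the dyadic cube `P = Q_{JK}`: `Σ_{Q ⊂ P, ℓ(Q)=2^{−ℓ}}
|Q|^{−s(·)/n} |t_Q| |Q|^{−1/2} χ_Q = Σ 2^{ℓ(s(·)+n/2)} |t_Q| χ_Q`. -/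
def seqLevelFn {n : ℕ} (s : EuclideanSpace ℝ (Fin n) → ℝ)
    (t : ℕ → (Fin n → ℤ) → ℝ≥0∞) (J : ℤ) (K : Fin n → ℤ) (ℓ : ℕ) :
    EuclideanSpace ℝ (Fin n) → ℝ≥0∞ :=
  Set.indicator (dyadicCube J K) (fun x =>
    ∑' k : Fin n → ℤ,
      if x ∈ dyadicCube (ℓ : ℤ) k ∧ dyadicCube (ℓ : ℤ) k ⊆ dyadicCube J K then
        ENNReal.ofReal ((2 : ℝ) ^ ((ℓ : ℝ) * (s x + n / 2))) * t ℓ k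
      else 0)

/-- The norm of the Besov-type sequence space `b^{s(·),φ}_{p(·),q(·)}(ℝⁿ)`:
sequences are indexed by dyadic cubes of side length `≤ 1`, encoded as pairs
`(ℓ, k)` with level `ℓ ∈ ℕ` (side length `2^{−ℓ}`) and corner `k ∈ ℤⁿ`. -/
def seqBesovNorm {n : ℕ} (p q s : EuclideanSpace ℝ (Fin n) → ℝ)
    (φ : EuclideanSpace ℝ (Fin n) → ℝ → ℝ)
    (t : ℕ → (Fin n → ℤ) → ℝ≥0∞) : ℝ≥0∞ :=
  ⨆ (J : ℤ) (K : Fin n → ℤ),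
    (ENNReal.ofReal (weightOn φ J K))⁻¹ *
      mixedNormR p q (fun m => seqLevelFn s t J K ((max J 0).toNat + m))

/-- The norm of the Besov-type sequence space `b^{s(·),φ}_{p(·),∞}(ℝⁿ)`. -/
def seqBesovNormInf {n : ℕ} (p s : EuclideanSpace ℝ (Fin n) → ℝ)
    (φ : EuclideanSpace ℝ (Fin n) → ℝ → ℝ)
    (t : ℕ → (Fin n → ℤ) → ℝ≥0∞) : ℝ≥0∞ :=
  ⨆ (J : ℤ) (K : Fin n → ℤ),
    (ENNReal.ofReal (weightOn φ J K))⁻¹ *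
      ⨆ m : ℕ, varNormR p (seqLevelFn s t J K ((max J 0).toNat + m))


/-!
The estimate holds level by level on every dyadic cube `P`, with a constant independent of `P`
and of the level. Fix a level `ℓ` and `λ` with `ϱ_{p₀}(f₀ / λ) ≤ 1`, where `fᵢ` is the level
function of `t` for the smoothness `sᵢ`. On a cube `Q` of level `ℓ`, `u = f₀ / λ` is constant up
to the factor `2^{ℓ · osc_Q s₀}`, and log-Hölder continuity bounds both `ℓ · osc_Q s₀` and
`ℓ · osc_Q p₀`; together with `∫_Q u^{p₀} ≤ 1` this gives `u(x) ≤ c |Q|^{-1/p₀(x)}` on `Q`.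
The trace condition reads `f₁ = |Q|^{1/p₀ - 1/p₁} f₀`, and as `p₀ ≤ p₁` the bound on `u` turns
into `(f₁ / (c λ))^{p₁} ≤ (f₀ / λ)^{p₀}` pointwise, so `‖f₁‖_{p₁} ≤ c ‖f₀‖_{p₀}`.
In dimension zero the trace condition forces `s₀ = s₁` and the Luxemburg norm does not depend
on the exponent.
-/

section DyadicCube

variable {n : ℕ}

theorem mem_dyadicCube_iff_eq_floor {j : ℤ} {k : Fin n → ℤ} {x : EuclideanSpace ℝ (Fin n)} :
    x ∈ dyadicCube j k ↔ k = fun i => ⌊(2 : ℝ) ^ j * x i⌋ := by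
  have h2 : (0 : ℝ) < 2 ^ j := zpow_pos two_pos j
  simp only [dyadicCube, funext_iff, eq_comm (a := k _), Int.floor_eq_iff]
  refine forall_congr' fun i => ?_
  rw [zpow_neg, inv_mul_le_iff₀ h2, lt_inv_mul_iff₀ h2]

theorem mem_dyadicCube_floor (j : ℤ) (x : EuclideanSpace ℝ (Fin n)) :
    x ∈ dyadicCube j (fun i => ⌊(2 : ℝ) ^ j * x i⌋) :=
  mem_dyadicCube_iff_eq_floor.2 rfl

theorem dyadicCube_eq_preimage (j : ℤ) (k : Fin n → ℤ) :
    dyadicCube j k = (MeasurableEquiv.toLp 2 (Fin n → ℝ)).symm ⁻¹'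
      Set.univ.pi fun i => Set.Ico ((2 : ℝ) ^ (-j) * k i) ((2 : ℝ) ^ (-j) * (k i + 1)) := by
  ext x
  simp [dyadicCube, Set.mem_pi, MeasurableEquiv.coe_toLp_symm]

theorem measurableSet_dyadicCube (j : ℤ) (k : Fin n → ℤ) : MeasurableSet (dyadicCube j k) := by
  rw [dyadicCube_eq_preimage]
  exact MeasurableEquiv.measurable _ (MeasurableSet.univ_pi fun _ => measurableSet_Ico)

theorem volume_dyadicCube (j : ℤ) (k : Fin n → ℤ) :
    volume (dyadicCube j k) = ENNReal.ofReal ((2 : ℝ) ^ (-(j * n : ℝ))) := by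
  rw [dyadicCube_eq_preimage,
    (EuclideanSpace.volume_preserving_symm_measurableEquiv_toLp (Fin n)).measure_preimage
      (MeasurableSet.univ_pi fun _ => measurableSet_Ico).nullMeasurableSet,
    volume_pi_pi]
  simp only [Real.volume_Ico, mul_add, mul_one, add_sub_cancel_left, Finset.prod_const,
    Finset.card_univ, Fintype.card_fin]
  rw [← ENNReal.ofReal_pow (by positivity), ← Real.rpow_intCast, ← Real.rpow_natCast,
    ← Real.rpow_mul zero_le_two]
  push_cast
  ring_nf

theorem dist_le_of_mem_dyadicCube {j : ℤ} {k : Fin n → ℤ} {x y : EuclideanSpace ℝ (Fin n)}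
    (hx : x ∈ dyadicCube j k) (hy : y ∈ dyadicCube j k) :
    dist x y ≤ √n * (2 : ℝ) ^ (-j) := by
  have hside : ∀ i, dist (x i) (y i) ^ 2 ≤ ((2 : ℝ) ^ (-j)) ^ 2 := fun i => by
    obtain ⟨hx₁, hx₂⟩ := hx i
    obtain ⟨hy₁, hy₂⟩ := hy i
    rw [Real.dist_eq, sq_abs]
    nlinarith
  calc dist x y = √(∑ i, dist (x i) (y i) ^ 2) := EuclideanSpace.dist_eq x y
    _ ≤ √(n * ((2 : ℝ) ^ (-j)) ^ 2) := by
      gcongr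
      simpa using Finset.sum_le_sum fun i (_ : i ∈ Finset.univ) => hside i
    _ = √n * (2 : ℝ) ^ (-j) := by
      rw [Real.sqrt_mul n.cast_nonneg, Real.sqrt_sq (by positivity)]

end DyadicCube

def DyadicOscillationLE {n : ℕ} (A : ℝ) (g : EuclideanSpace ℝ (Fin n) → ℝ) : Prop :=
  ∀ (ℓ : ℕ) (k : Fin n → ℤ) (y z : EuclideanSpace ℝ (Fin n)),
    y ∈ dyadicCube ℓ k → z ∈ dyadicCube ℓ k → ℓ * |g y - g z| ≤ A

theorem natCast_le_mul_log_of_le_mul_zpow {D d : ℝ} {ℓ : ℕ} (hD : 1 ≤ D) (hd : 0 < d)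
    (hdℓ : d ≤ D * 2 ^ (-(ℓ : ℤ))) :
    (ℓ : ℝ) ≤ (1 + log D) / log 2 * log (exp 1 + 1 / d) := by
  set L := log (exp 1 + 1 / d)
  have hL : 1 ≤ L := by
    rw [← log_exp 1]
    exact log_le_log (exp_pos 1) (by linarith [one_div_pos.2 hd])
  have hlog : ℓ * log 2 - log D ≤ L := by
    rw [zpow_neg, zpow_natCast, le_mul_inv_iff₀ (by positivity)] at hdℓ
    calc ℓ * log 2 - log D = log (2 ^ ℓ / D) := by
          rw [log_div (by positivity) (by positivity), log_pow]
      _ ≤ log (1 / d) := log_le_log (by positivity) (by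
          rw [div_le_div_iff₀ (by positivity) hd]; linarith)
      _ ≤ L := log_le_log (by positivity) (by linarith [exp_pos 1])
  rw [div_mul_eq_mul_div, le_div_iff₀ (log_pos one_lt_two)]
  nlinarith [mul_nonneg (log_nonneg hD) (sub_nonneg.2 hL)]

theorem LocLogHolderWith.dyadicOscillationLE {n : ℕ} {C : ℝ}
    {g : EuclideanSpace ℝ (Fin n) → ℝ} (hC : 0 ≤ C) (hg : LocLogHolderWith C g) :
    DyadicOscillationLE (C * ((1 + log (max 1 √n)) / log 2)) g := by
  have hB : 0 ≤ (1 + log (max 1 √n)) / log 2 :=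
    div_nonneg (by linarith [log_nonneg (le_max_left 1 √n)]) (log_nonneg one_le_two)
  intro ℓ k y z hy hz
  rcases eq_or_ne y z with rfl | hne
  · simpa using mul_nonneg hC hB
  have hd : 0 < dist y z := dist_pos.2 hne
  have hL : 0 < log (exp 1 + 1 / dist y z) :=
    log_pos (by linarith [one_lt_exp_iff.2 one_pos, one_div_pos.2 hd])
  have hℓ := natCast_le_mul_log_of_le_mul_zpow (le_max_left 1 √n) hd
    ((dist_le_of_mem_dyadicCube hy hz).trans (by gcongr; exact le_max_right _ _))
  have hgyz := hg y z hne
  generalize log (exp 1 + 1 / dist y z) = L at hL hℓ hgyz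
  calc ℓ * |g y - g z|
      ≤ (1 + log (max 1 √n)) / log 2 * L * (C / L) :=
        mul_le_mul hℓ hgyz (abs_nonneg _) (by positivity)
    _ = C * ((1 + log (max 1 √n)) / log 2) := by field_simp [hL.ne']

theorem DyadicOscillationLE.nonneg {n : ℕ} {A : ℝ} {g : EuclideanSpace ℝ (Fin n) → ℝ}
    (h : DyadicOscillationLE A g) : 0 ≤ A := by
  simpa using h 0 _ 0 0 (mem_dyadicCube_floor 0 0) (mem_dyadicCube_floor 0 0)

theorem exists_pos_ae_le_of_essInf_pos {α : Type*} [MeasurableSpace α] {μ : Measure α}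
    {p : α → ℝ} (h : 0 < essInf p μ) : ∃ ε : ℝ, 0 < ε ∧ ∀ᵐ x ∂μ, ε ≤ p x := by
  rw [essInf, Filter.liminf_eq] at h
  have hne : {a : ℝ | ∀ᶠ x in ae μ, a ≤ p x}.Nonempty := by
    by_contra hempty
    rw [Set.not_nonempty_iff_eq_empty.1 hempty, Real.sSup_empty] at h
    exact h.false
  obtain ⟨ε, hε, hεpos⟩ := exists_lt_of_lt_csSup hne h
  exact ⟨ε, hεpos, hε⟩

theorem varNormR_le_mul_of_varModularR_le_one {n : ℕ} {p₀ p₁ : EuclideanSpace ℝ (Fin n) → ℝ}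
    {f₀ f₁ : EuclideanSpace ℝ (Fin n) → ℝ≥0∞} {c : ℝ≥0∞} (hc₀ : c ≠ 0) (hc : c ≠ ⊤)
    (h : ∀ lam : ℝ≥0∞, 0 < lam → varModularR p₀ (fun x => f₀ x / lam) ≤ 1 →
      varModularR p₁ (fun x => f₁ x / (c * lam)) ≤ 1) :
    varNormR p₁ f₁ ≤ c * varNormR p₀ f₀ := by
  rw [← ENNReal.div_le_iff' hc₀ hc]
  refine le_sInf fun lam ⟨hlam, hmod⟩ => ?_
  rw [ENNReal.div_le_iff' hc₀ hc]
  exact sInf_le ⟨ENNReal.mul_pos hc₀ hlam.ne', h lam hlam hmod⟩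

theorem varModularR_fin_zero (p : EuclideanSpace ℝ (Fin 0) → ℝ)
    (g : EuclideanSpace ℝ (Fin 0) → ℝ≥0∞) : varModularR p g = g 0 ^ p 0 := by
  have hvol : volume (Set.univ : Set (EuclideanSpace ℝ (Fin 0))) = 1 := by
    rw [← Set.preimage_univ (f := (MeasurableEquiv.toLp 2 (Fin 0 → ℝ)).symm),
      (EuclideanSpace.volume_preserving_symm_measurableEquiv_toLp (Fin 0)).measure_preimage
        MeasurableSet.univ.nullMeasurableSet, volume_pi, Measure.pi_univ]
    simp
  have hconst : (fun x => g x ^ p x) = fun _ => g 0 ^ p 0 :=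
    funext fun x => by rw [Subsingleton.elim x 0]
  rw [varModularR, hconst, lintegral_const, hvol, mul_one]

theorem varNormR_fin_zero_congr {p p' : EuclideanSpace ℝ (Fin 0) → ℝ} (hp : 0 < p 0)
    (hp' : 0 < p' 0) (f : EuclideanSpace ℝ (Fin 0) → ℝ≥0∞) :
    varNormR p f = varNormR p' f := by
  have key : ∀ q : EuclideanSpace ℝ (Fin 0) → ℝ, 0 < q 0 → ∀ lam : ℝ≥0∞,
      varModularR q (fun x => f x / lam) ≤ 1 ↔ f 0 / lam ≤ 1 := fun q hq lam => by
    rw [varModularR_fin_zero]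
    exact ⟨fun h => not_lt.1 fun h1 => (ENNReal.one_lt_rpow h1 hq).not_ge h,
      fun h => ENNReal.rpow_le_one h hq.le⟩
  simp only [varNormR, key p hp, key p' hp']

section SeqLevelFn

variable {n : ℕ} (s : EuclideanSpace ℝ (Fin n) → ℝ) {t : ℕ → (Fin n → ℤ) → ℝ≥0∞} {J : ℤ}
  {K : Fin n → ℤ} {ℓ : ℕ} {k : Fin n → ℤ} {x y : EuclideanSpace ℝ (Fin n)}

theorem seqLevelFn_apply_of_mem (hx : x ∈ dyadicCube ℓ k) :
    seqLevelFn s t J K ℓ x = if dyadicCube ℓ k ⊆ dyadicCube J K then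
      ENNReal.ofReal ((2 : ℝ) ^ ((ℓ : ℝ) * (s x + n / 2))) * t ℓ k else 0 := by
  rw [seqLevelFn, Set.indicator_apply, tsum_eq_single k fun k' hk' => if_neg fun h =>
    hk' ((mem_dyadicCube_iff_eq_floor.1 h.1).trans (mem_dyadicCube_iff_eq_floor.1 hx).symm)]
  by_cases hQP : dyadicCube ℓ k ⊆ dyadicCube J K
  · simp [hQP, hx, hQP hx]
  · simp [hQP]

theorem seqLevelFn_eq_mul (s' : EuclideanSpace ℝ (Fin n) → ℝ) (hx : x ∈ dyadicCube ℓ k)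
    (hy : y ∈ dyadicCube ℓ k) :
    seqLevelFn s t J K ℓ x =
      ENNReal.ofReal ((2 : ℝ) ^ ((ℓ : ℝ) * (s x - s' y))) * seqLevelFn s' t J K ℓ y := by
  rw [seqLevelFn_apply_of_mem s hx, seqLevelFn_apply_of_mem s' hy]
  split_ifs
  · rw [← mul_assoc, ← ENNReal.ofReal_mul (by positivity), ← Real.rpow_add two_pos]
    ring_nf
  · rw [mul_zero]

theorem seqLevelFn_ne_top (ht : ∀ ℓ k, t ℓ k ≠ ⊤) : seqLevelFn s t J K ℓ x ≠ ⊤ := by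
  rw [seqLevelFn_apply_of_mem s (mem_dyadicCube_floor ℓ x)]
  split_ifs
  · exact ENNReal.mul_ne_top ENNReal.ofReal_ne_top (ht _ _)
  · exact ENNReal.zero_ne_top

end SeqLevelFn

section LocalBound

variable {α : Type*} [MeasurableSpace α] {μ : Measure α} {Q : Set α} {g : α → ℝ≥0∞}
  {p : α → ℝ} {w : ℝ}

theorem mul_le_one_of_setLIntegral_rpow_le_one (hg : ∫⁻ y in Q, g y ^ p y ∂μ ≤ 1)
    (hμQ : μ Q = ENNReal.ofReal w) (hw : 0 ≤ w) {m : ℝ}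
    (hm : ∀ᵐ y ∂μ.restrict Q, ENNReal.ofReal m ≤ g y ^ p y) : m * w ≤ 1 := by
  rw [← ENNReal.ofReal_le_one, ENNReal.ofReal_mul' hw, ← hμQ, ← setLIntegral_const]
  exact (lintegral_mono_ae hm).trans hg

theorem le_rpow_mul_rpow_neg_of_setLIntegral_rpow_le_one (hg : ∫⁻ y in Q, g y ^ p y ∂μ ≤ 1)
    (hμQ : μ Q = ENNReal.ofReal w) (hw₀ : 0 < w) (hw₁ : w ≤ 1) {pm κ v : ℝ} {x : α}
    (hpm : 0 < pm) (hpx : pm ≤ p x) (hκ : 1 ≤ κ)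
    (hQ : ∀ᵐ y ∂μ.restrict Q,
      pm ≤ p y ∧ ENNReal.ofReal v ≤ g y ∧ w⁻¹ ^ (|p x - p y| / pm) ≤ κ) :
    v ≤ κ ^ (1 / pm) * w ^ (-(1 / p x)) := by
  have hpx₀ : 0 < p x := hpm.trans_le hpx
  rcases le_or_gt v 1 with hv₁ | hv₁
  · exact hv₁.trans (one_le_mul_of_one_le_of_one_le (one_le_rpow hκ (by positivity))
      (one_le_rpow_of_pos_of_le_one_of_nonpos hw₀ hw₁ (by simp [hpx₀.le])))
  have hv₀ : 0 < v := one_pos.trans hv₁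
  have hpow : ∀ y, pm ≤ p y → ENNReal.ofReal v ≤ g y → ∀ m ≤ v ^ p y,
      ENNReal.ofReal m ≤ g y ^ p y := fun y hy hvy m hm => calc
    ENNReal.ofReal m ≤ ENNReal.ofReal (v ^ p y) := ENNReal.ofReal_le_ofReal hm
    _ = ENNReal.ofReal v ^ p y := (ENNReal.ofReal_rpow_of_nonneg hv₀.le (by linarith)).symm
    _ ≤ g y ^ p y := ENNReal.rpow_le_rpow hvy (by linarith)
  -- The crude bound `v ^ pm ≤ |Q|⁻¹` keeps `v ^ (p x - p y)` below `κ`, so that `v ^ p x / κ`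
  -- bounds `g ^ p` from below on `Q`.
  have hvpm : v ^ pm ≤ w⁻¹ := by
    rw [← one_div, le_div_iff₀ hw₀]
    exact mul_le_one_of_setLIntegral_rpow_le_one hg hμQ hw₀.le <| hQ.mono fun y ⟨hy, hvy, _⟩ =>
      hpow y hy hvy _ (rpow_le_rpow_of_exponent_le hv₁.le hy)
  have hosc : ∀ y, w⁻¹ ^ (|p x - p y| / pm) ≤ κ → v ^ p x / κ ≤ v ^ p y := fun y hy => by
    have hvκ : v ^ (p x - p y) ≤ κ := calc
      v ^ (p x - p y) ≤ v ^ |p x - p y| := rpow_le_rpow_of_exponent_le hv₁.le (le_abs_self _)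
      _ = (v ^ pm) ^ (|p x - p y| / pm) := by
        rw [← rpow_mul hv₀.le, mul_div_cancel₀ _ hpm.ne']
      _ ≤ κ := (rpow_le_rpow (by positivity) hvpm (by positivity)).trans hy
    rw [div_le_iff₀ (by positivity), ← sub_add_cancel (p x) (p y), rpow_add hv₀, mul_comm]
    exact mul_le_mul_of_nonneg_left hvκ (by positivity)
  have hvpx : v ^ p x ≤ κ * w⁻¹ := by
    rw [← div_le_iff₀' (by positivity), ← one_div, le_div_iff₀ hw₀]
    exact mul_le_one_of_setLIntegral_rpow_le_one hg hμQ hw₀.le <| hQ.mono fun y ⟨hy, hvy, hyκ⟩ =>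
      hpow y hy hvy _ (hosc y hyκ)
  calc v = (v ^ p x) ^ (1 / p x) := by rw [← rpow_mul hv₀.le, mul_one_div_cancel hpx₀.ne', rpow_one]
    _ ≤ (κ * w⁻¹) ^ (1 / p x) := rpow_le_rpow (by positivity) hvpx (by positivity)
    _ = κ ^ (1 / p x) * w ^ (-(1 / p x)) := by
      rw [mul_rpow (by positivity) (by positivity), inv_rpow hw₀.le, ← rpow_neg hw₀.le]
    _ ≤ κ ^ (1 / pm) * w ^ (-(1 / p x)) := by
      gcongr

end LocalBound

theorem div_mul_rpow_sub_rpow_le_rpow {c w q₀ q₁ u : ℝ} (hc : 1 ≤ c) (hw : 0 < w) (hq₀ : 0 < q₀)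
    (hq : q₀ ≤ q₁) (hu₀ : 0 ≤ u) (hu : u ≤ c * w ^ (-(1 / q₀))) :
    (u / c * w ^ (1 / q₀ - 1 / q₁)) ^ q₁ ≤ u ^ q₀ := by
  have hc₀ : 0 < c := one_pos.trans_le hc
  have hq₁ : 0 < q₁ := hq₀.trans_le hq
  have hW : 0 < c * w ^ (-(1 / q₀)) := by positivity
  obtain ⟨θ, hθ₀, hθ₁, rfl⟩ : ∃ θ, 0 ≤ θ ∧ θ ≤ 1 ∧ u = c * w ^ (-(1 / q₀)) * θ :=
    ⟨u / (c * w ^ (-(1 / q₀))), by positivity, (div_le_one hW).2 hu, by field_simp⟩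
  calc (c * w ^ (-(1 / q₀)) * θ / c * w ^ (1 / q₀ - 1 / q₁)) ^ q₁
      = (θ * w ^ (-(1 / q₁))) ^ q₁ := by
        rw [mul_div_right_comm, mul_div_cancel_left₀ _ hc₀.ne', mul_right_comm, mul_comm,
          ← rpow_add hw]
        ring_nf
    _ = θ ^ q₁ * w⁻¹ := by
      rw [mul_rpow hθ₀ (by positivity), ← rpow_mul hw.le, neg_mul, one_div_mul_cancel hq₁.ne',
        rpow_neg_one]
    _ ≤ θ ^ q₀ * w⁻¹ :=
      mul_le_mul_of_nonneg_right (rpow_le_rpow_of_exponent_ge' hθ₀ hθ₁ hq₀.le hq) (by positivity)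
    _ ≤ c ^ q₀ * (θ ^ q₀ * w⁻¹) := le_mul_of_one_le_left (by positivity) (one_le_rpow hc hq₀.le)
    _ = (c * w ^ (-(1 / q₀)) * θ) ^ q₀ := by
      rw [mul_rpow (by positivity) hθ₀, mul_rpow hc₀.le (by positivity), ← rpow_mul hw.le,
        neg_mul, one_div_mul_cancel hq₀.ne', rpow_neg_one]
      ring

section Embedding

variable {n : ℕ} {p₀ p₁ s₀ s₁ : EuclideanSpace ℝ (Fin n) → ℝ} {As Ap pm : ℝ}
  {t : ℕ → (Fin n → ℤ) → ℝ≥0∞} {J : ℤ} {K : Fin n → ℤ} {ℓ : ℕ} {lam : ℝ≥0∞}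
  {x : EuclideanSpace ℝ (Fin n)}

theorem toReal_seqLevelFn_div_le (hs₀ : DyadicOscillationLE As s₀)
    (hp₀ : DyadicOscillationLE Ap p₀) (hpm : 0 < pm) (hp₀pm : ∀ᵐ y, pm ≤ p₀ y)
    (ht : ∀ ℓ k, t ℓ k ≠ ⊤) (hlam : lam ≠ 0)
    (hmod : varModularR p₀ (fun y => seqLevelFn s₀ t J K ℓ y / lam) ≤ 1) (hx : pm ≤ p₀ x) :
    (seqLevelFn s₀ t J K ℓ x / lam).toReal ≤
      2 ^ As * (2 ^ (Ap * n / pm)) ^ (1 / pm) * (2 ^ (-(ℓ * n : ℝ))) ^ (-(1 / p₀ x)) := by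
  set k : Fin n → ℤ := fun i => ⌊(2 : ℝ) ^ (ℓ : ℤ) * x i⌋
  have hxQ : x ∈ dyadicCube ℓ k := mem_dyadicCube_floor ℓ x
  have hgx : seqLevelFn s₀ t J K ℓ x / lam ≠ ⊤ :=
    ENNReal.div_ne_top (seqLevelFn_ne_top s₀ ht) hlam
  have hw₁ : (2 : ℝ) ^ (-(ℓ * n : ℝ)) ≤ 1 :=
    rpow_le_one_of_one_le_of_nonpos one_le_two (by simp only [neg_nonpos]; positivity)
  have hκ : 1 ≤ (2 : ℝ) ^ (Ap * n / pm) :=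
    one_le_rpow one_le_two (by have := hp₀.nonneg; positivity)
  rw [mul_assoc, ← div_le_iff₀' (by positivity)]
  refine le_rpow_mul_rpow_neg_of_setLIntegral_rpow_le_one (Q := dyadicCube ℓ k)
    ((setLIntegral_le_lintegral _ _).trans hmod) (by simpa using volume_dyadicCube ℓ k)
    (by positivity) hw₁ hpm hx hκ ?_
  refine (ae_restrict_of_ae hp₀pm).and
    (ae_restrict_of_forall_mem (measurableSet_dyadicCube _ _) fun y hy => ⟨?_, ?_⟩)
  · rw [ENNReal.ofReal_div_of_pos (by positivity), ENNReal.ofReal_toReal hgx]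
    refine ENNReal.div_le_of_le_mul' ?_
    rw [seqLevelFn_eq_mul s₀ s₀ hxQ hy, mul_div_assoc]
    gcongr
    · exact one_le_two
    exact (mul_le_mul_of_nonneg_left (le_abs_self _) ℓ.cast_nonneg).trans (hs₀ ℓ k x y hxQ hy)
  · rw [← rpow_neg zero_le_two, neg_neg, ← rpow_mul zero_le_two]
    refine rpow_le_rpow_of_exponent_le one_le_two ?_
    calc ℓ * n * (|p₀ x - p₀ y| / pm) = ℓ * |p₀ x - p₀ y| * n / pm := by ring
      _ ≤ Ap * n / pm := by gcongr; exact hp₀ ℓ k x y hxQ hy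

theorem rpow_seqLevelFn_div_le_rpow (hn : 0 < n) (hs₀ : DyadicOscillationLE As s₀)
    (hp₀ : DyadicOscillationLE Ap p₀) (hpm : 0 < pm) (hp₀pm : ∀ᵐ y, pm ≤ p₀ y)
    (hle : ∀ x, s₁ x ≤ s₀ x) (htrace : ∀ x, s₀ x - n / p₀ x = s₁ x - n / p₁ x)
    (ht : ∀ ℓ k, t ℓ k ≠ ⊤) (hlam : lam ≠ 0)
    (hmod : varModularR p₀ (fun y => seqLevelFn s₀ t J K ℓ y / lam) ≤ 1)
    (hx₀ : pm ≤ p₀ x) (hx₁ : 0 < p₁ x) :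
    (seqLevelFn s₁ t J K ℓ x / (ENNReal.ofReal (2 ^ As * (2 ^ (Ap * n / pm)) ^ (1 / pm)) * lam))
      ^ p₁ x ≤ (seqLevelFn s₀ t J K ℓ x / lam) ^ p₀ x := by
  have hxQ := mem_dyadicCube_floor ℓ x
  have hp₀x : 0 < p₀ x := hpm.trans_le hx₀
  have hp₀₁ : p₀ x ≤ p₁ x := by
    have : (n : ℝ) / p₁ x ≤ n / p₀ x := by linarith [htrace x, hle x]
    rwa [div_le_div_iff_of_pos_left (by positivity) hx₁ hp₀x] at this
  have hc : 1 ≤ 2 ^ As * ((2 : ℝ) ^ (Ap * n / pm)) ^ (1 / pm) :=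
    one_le_mul_of_one_le_of_one_le (one_le_rpow one_le_two hs₀.nonneg)
      (one_le_rpow (one_le_rpow one_le_two (by have := hp₀.nonneg; positivity)) (by positivity))
  have hf₁ : seqLevelFn s₁ t J K ℓ x = ENNReal.ofReal (((2 : ℝ) ^ (-(ℓ * n : ℝ))) ^
      (1 / p₀ x - 1 / p₁ x)) * seqLevelFn s₀ t J K ℓ x := by
    rw [seqLevelFn_eq_mul s₁ s₀ hxQ hxQ, ← rpow_mul zero_le_two]
    congr 3
    rw [show s₁ x - s₀ x = n / p₁ x - n / p₀ x by linarith [htrace x]]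
    ring
  have hu := toReal_seqLevelFn_div_le hs₀ hp₀ hpm hp₀pm ht hlam hmod hx₀
  set u := (seqLevelFn s₀ t J K ℓ x / lam).toReal
  have hu_eq : seqLevelFn s₀ t J K ℓ x / lam = ENNReal.ofReal u :=
    (ENNReal.ofReal_toReal (ENNReal.div_ne_top (seqLevelFn_ne_top s₀ ht) hlam)).symm
  rw [hf₁, ENNReal.mul_div_mul_comm (Or.inl (by positivity)) (Or.inl ENNReal.ofReal_ne_top), hu_eq,
    ← ENNReal.ofReal_div_of_pos (by positivity), ← ENNReal.ofReal_mul (by positivity), div_mul_comm,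
    ENNReal.ofReal_rpow_of_nonneg (by positivity) hx₁.le,
    ENNReal.ofReal_rpow_of_nonneg ENNReal.toReal_nonneg hp₀x.le]
  exact ENNReal.ofReal_le_ofReal
    (div_mul_rpow_sub_rpow_le_rpow hc (by positivity) hp₀x hp₀₁ ENNReal.toReal_nonneg hu)

theorem varNormR_seqLevelFn_le (hn : 0 < n) (hs₀ : DyadicOscillationLE As s₀)
    (hp₀ : DyadicOscillationLE Ap p₀) (hpm : 0 < pm) (hp₀pm : ∀ᵐ y, pm ≤ p₀ y)
    (hp₁ : ∀ᵐ y, 0 < p₁ y) (hle : ∀ x, s₁ x ≤ s₀ x)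
    (htrace : ∀ x, s₀ x - n / p₀ x = s₁ x - n / p₁ x) (ht : ∀ ℓ k, t ℓ k ≠ ⊤) :
    varNormR p₁ (seqLevelFn s₁ t J K ℓ) ≤ ENNReal.ofReal (2 ^ As * (2 ^ (Ap * n / pm)) ^ (1 / pm))
      * varNormR p₀ (seqLevelFn s₀ t J K ℓ) :=
  varNormR_le_mul_of_varModularR_le_one (by positivity) ENNReal.ofReal_ne_top
    fun _ hlam hmod => (lintegral_mono_ae ((hp₀pm.and hp₁).mono fun _ hx =>
      rpow_seqLevelFn_div_le_rpow hn hs₀ hp₀ hpm hp₀pm hle htrace ht hlam.ne' hmod hx.1 hx.2)).trans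
        hmod

end Embedding

theorem seqBesovNormInf_le_mul {n : ℕ} {p₀ p₁ s₀ s₁ : EuclideanSpace ℝ (Fin n) → ℝ}
    {φ : EuclideanSpace ℝ (Fin n) → ℝ → ℝ} {t : ℕ → (Fin n → ℤ) → ℝ≥0∞} {c : ℝ≥0∞}
    (h : ∀ J K ℓ, varNormR p₁ (seqLevelFn s₁ t J K ℓ) ≤ c * varNormR p₀ (seqLevelFn s₀ t J K ℓ)) :
    seqBesovNormInf p₁ s₁ φ t ≤ c * seqBesovNormInf p₀ s₀ φ t := by
  simp only [seqBesovNormInf, ENNReal.mul_iSup]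
  refine iSup_mono fun J => iSup_mono fun K => iSup_mono fun m => ?_
  rw [mul_left_comm]
  gcongr
  exact h _ _ _

theorem seqBesov_sobolev_embedding_general {n : ℕ}
    (p₀ p₁ s₀ s₁ : EuclideanSpace ℝ (Fin n) → ℝ)
    (hp₀_log : GlobLogHolder p₀)
    (hp₀_minus : 0 < essInf p₀ (volume : Measure (EuclideanSpace ℝ (Fin n))))
    (hp₁_minus : 0 < essInf p₁ (volume : Measure (EuclideanSpace ℝ (Fin n))))
    (hs₀_log : ∃ C : ℝ, 0 < C ∧ LocLogHolderWith C s₀)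
    (φ : EuclideanSpace ℝ (Fin n) → ℝ → ℝ)
    (hle : ∀ x, s₁ x ≤ s₀ x)
    (htrace : ∀ x, s₀ x - n / p₀ x = s₁ x - n / p₁ x) :
    ∃ C : ℝ, 0 < C ∧ ∀ t : ℕ → (Fin n → ℤ) → ℂ,
      seqBesovNormInf p₁ s₁ φ (fun ℓ k => (‖t ℓ k‖₊ : ℝ≥0∞))
        ≤ ENNReal.ofReal C * seqBesovNormInf p₀ s₀ φ (fun ℓ k => (‖t ℓ k‖₊ : ℝ≥0∞)) := by
  obtain ⟨pm, hpm, hp₀pm⟩ := exists_pos_ae_le_of_essInf_pos hp₀_minus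
  obtain ⟨pm₁, hpm₁, hp₁pm⟩ := exists_pos_ae_le_of_essInf_pos hp₁_minus
  have hp₀ : ∀ᵐ x, 0 < p₀ x := hp₀pm.mono fun x hx => hpm.trans_le hx
  have hp₁ : ∀ᵐ x, 0 < p₁ x := hp₁pm.mono fun x hx => hpm₁.trans_le hx
  suffices ∃ C : ℝ, 0 < C ∧ ∀ T : ℕ → (Fin n → ℤ) → ℝ≥0∞, (∀ ℓ k, T ℓ k ≠ ⊤) → ∀ J K ℓ,
      varNormR p₁ (seqLevelFn s₁ T J K ℓ) ≤
        ENNReal.ofReal C * varNormR p₀ (seqLevelFn s₀ T J K ℓ) by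
    obtain ⟨C, hC, h⟩ := this
    exact ⟨C, hC, fun t => seqBesovNormInf_le_mul (h _ fun _ _ => ENNReal.coe_ne_top)⟩
  rcases n.eq_zero_or_pos with rfl | hn
  · have hs : s₀ = s₁ := funext fun x => by simpa using htrace x
    have at_zero : ∀ p : EuclideanSpace ℝ (Fin 0) → ℝ, (∀ᵐ x, 0 < p x) → 0 < p 0 := fun p hp =>
      let ⟨x, hx⟩ := hp.exists; Subsingleton.elim x 0 ▸ hx
    refine ⟨1, one_pos, fun T _ J K ℓ => ?_⟩
    rw [hs, ENNReal.ofReal_one, one_mul,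
      varNormR_fin_zero_congr (at_zero p₁ hp₁) (at_zero p₀ hp₀)]
  · obtain ⟨Cs, hCs, hs₀_loc⟩ := hs₀_log
    obtain ⟨⟨Cp, hCp, hp₀_loc⟩, -⟩ := hp₀_log
    exact ⟨_, by positivity, fun T hT J K ℓ => varNormR_seqLevelFn_le hn
      (hs₀_loc.dyadicOscillationLE hCs.le) (hp₀_loc.dyadicOscillationLE hCp.le) hpm hp₀pm hp₁ hle
      htrace hT⟩

/-- Sobolev-type embedding for sequence spaces. If
`s₁ ≤ s₀` and `s₀ − n/p₀ = s₁ − n/p₁` pointwise, then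
`b^{s₀(·),φ}_{p₀(·),∞}(ℝⁿ) ↪ b^{s₁(·),φ}_{p₁(·),∞}(ℝⁿ)`. -/
theorem seqBesov_sobolev_embedding {n : ℕ}
    (p₀ p₁ s₀ s₁ : EuclideanSpace ℝ (Fin n) → ℝ)
    (hp₀_meas : Measurable p₀) (hp₁_meas : Measurable p₁)
    (hs₀_meas : Measurable s₀) (hs₁_meas : Measurable s₁)
    (hp₀_log : GlobLogHolder p₀) (hp₁_log : GlobLogHolder p₁)
    (hp₀_minus : 0 < essInf p₀ (volume : Measure (EuclideanSpace ℝ (Fin n))))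
    (hp₁_minus : 0 < essInf p₁ (volume : Measure (EuclideanSpace ℝ (Fin n))))
    (hs₀_log : ∃ C : ℝ, 0 < C ∧ LocLogHolderWith C s₀)
    (hs₁_log : ∃ C : ℝ, 0 < C ∧ LocLogHolderWith C s₁)
    (hs₀_bdd : ∃ M : ℝ, ∀ x, |s₀ x| ≤ M) (hs₁_bdd : ∃ M : ℝ, ∀ x, |s₁ x| ≤ M)
    (φ : EuclideanSpace ℝ (Fin n) → ℝ → ℝ) (c₁ c₂ : ℝ) (hφ : IsGWeight φ c₁ c₂)
    (hle : ∀ x, s₁ x ≤ s₀ x)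
    (htrace : ∀ x, s₀ x - n / p₀ x = s₁ x - n / p₁ x) :
    ∃ C : ℝ, 0 < C ∧ ∀ t : ℕ → (Fin n → ℤ) → ℂ,
      seqBesovNormInf p₁ s₁ φ (fun ℓ k => (‖t ℓ k‖₊ : ℝ≥0∞))
        ≤ ENNReal.ofReal C * seqBesovNormInf p₀ s₀ φ (fun ℓ k => (‖t ℓ k‖₊ : ℝ≥0∞)) :=
  seqBesov_sobolev_embedding_general p₀ p₁ s₀ s₁ hp₀_log hp₀_minus hp₁_minus hs₀_log φ hle htrace
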